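/- arXiv:1402.6777 — 3 statements merged into one kernel-verified Lean document; each statement's English description precedes it below -/
import Mathlib

section
/- Let E be a real inner product space and let 0 < n ≤ m be real numbers. Then for all z, w ∈ E, ‖q_m(z + w) − q_n(w)‖ ≤ ‖z‖ + 2‖w‖·1_{‖w‖ > n}, where 1_{‖w‖ > n} equals 1 if ‖w‖ > n and 0 otherwise. -/
/-! In an inner product space `q_r` is 1-Lipschitz: the angular part
`‖c • x - d • y‖² - (c‖x‖ - d‖y‖)² = 2cd(‖x‖‖y‖ - ⟪x, y⟫)` only shrinks when `0 ≤ cd ≤ 1`, and the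
radial part `min ‖x‖ r` is 1-Lipschitz in `‖x‖`. So `q_m (z + w)` is within `‖z‖` of `q_m w`; when
`‖w‖ ≤ n ≤ m` both truncations fix `w`, and otherwise each of `q_m`, `q_n` moves `w` by at most
`‖w‖`. -/

/-- The radial truncation at level `r`: `q_r(x) = (r / max(‖x‖, r)) • x`. -/
noncomputable def qtrunc {E : Type*} [NormedAddCommGroup E] [NormedSpace ℝ E]
    (r : ℝ) (x : E) : E :=
  (r / max ‖x‖ r) • x

theorem norm_smul_sub_smul_sq_sub_le {E : Type*} [SeminormedAddCommGroup E]
    [InnerProductSpace ℝ E] {c d : ℝ} (hc : 0 ≤ c) (hd : 0 ≤ d) (hcd : c * d ≤ 1) (x y : E) :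
    ‖c • x - d • y‖ ^ 2 - (c * ‖x‖ - d * ‖y‖) ^ 2 ≤ ‖x - y‖ ^ 2 - (‖x‖ - ‖y‖) ^ 2 := by
  have expand (u v : E) :
      ‖u - v‖ ^ 2 - (‖u‖ - ‖v‖) ^ 2 = 2 * (‖u‖ * ‖v‖ - inner ℝ u v) := by
    rw [norm_sub_sq_real]; ring
  have gap_nonneg : 0 ≤ 2 * (‖x‖ * ‖y‖ - inner ℝ x y) := by
    linarith [real_inner_le_norm x y]
  calc ‖c • x - d • y‖ ^ 2 - (c * ‖x‖ - d * ‖y‖) ^ 2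
      = c * d * (2 * (‖x‖ * ‖y‖ - inner ℝ x y)) := by
        rw [← norm_smul_of_nonneg hc, ← norm_smul_of_nonneg hd, expand, norm_smul_of_nonneg hc,
          norm_smul_of_nonneg hd, real_inner_smul_left, real_inner_smul_right]
        ring
    _ ≤ 2 * (‖x‖ * ‖y‖ - inner ℝ x y) := mul_le_of_le_one_left gap_nonneg hcd
    _ = ‖x - y‖ ^ 2 - (‖x‖ - ‖y‖) ^ 2 := (expand x y).symm

theorem div_max_mem_Icc {r : ℝ} (hr : 0 ≤ r) (a : ℝ) : r / max a r ∈ Set.Icc 0 1 :=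
  ⟨div_nonneg hr (hr.trans (le_max_right _ _)),
    div_le_one_of_le₀ (le_max_right _ _) (hr.trans (le_max_right _ _))⟩

theorem div_max_mul_self {r : ℝ} (hr : 0 < r) (a : ℝ) : r / max a r * a = min a r := by
  rcases le_total a r with ha | ha
  · rw [max_eq_right ha, min_eq_left ha, div_self hr.ne', one_mul]
  · rw [max_eq_left ha, min_eq_right ha, div_mul_cancel₀ _ (hr.trans_le ha).ne']

section qtrunc

variable {E : Type*} [NormedAddCommGroup E] [NormedSpace ℝ E] {r : ℝ}

theorem qtrunc_eq_self (hr : 0 < r) {x : E} (hx : ‖x‖ ≤ r) : qtrunc r x = x := by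
  rw [qtrunc, max_eq_right hx, div_self hr.ne', one_smul]

theorem norm_sub_qtrunc_le (hr : 0 ≤ r) (x : E) : ‖x - qtrunc r x‖ ≤ ‖x‖ := by
  obtain ⟨hc0, hc1⟩ := div_max_mem_Icc hr ‖x‖
  calc ‖x - qtrunc r x‖ = (1 - r / max ‖x‖ r) * ‖x‖ := by
        rw [qtrunc, ← norm_smul_of_nonneg (sub_nonneg.2 hc1), sub_smul, one_smul]
    _ ≤ ‖x‖ := mul_le_of_le_one_left (norm_nonneg x) (by linarith)

end qtrunc

theorem norm_qtrunc_sub_qtrunc_le {E : Type*} [NormedAddCommGroup E] [InnerProductSpace ℝ E]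
    {r : ℝ} (hr : 0 < r) (x y : E) : ‖qtrunc r x - qtrunc r y‖ ≤ ‖x - y‖ := by
  obtain ⟨hc0, hc1⟩ := div_max_mem_Icc hr.le ‖x‖
  obtain ⟨hd0, hd1⟩ := div_max_mem_Icc hr.le ‖y‖
  have key := norm_smul_sub_smul_sq_sub_le hc0 hd0 (mul_le_one₀ hc1 hd0 hd1) x y
  rw [div_max_mul_self hr, div_max_mul_self hr] at key
  have min_sq_le : (min ‖x‖ r - min ‖y‖ r) ^ 2 ≤ (‖x‖ - ‖y‖) ^ 2 := by
    have h := abs_min_sub_min_le_max ‖x‖ r ‖y‖ r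
    rw [sub_self, abs_zero, max_eq_left (abs_nonneg _)] at h
    exact sq_le_sq.2 h
  have sq_le : ‖qtrunc r x - qtrunc r y‖ ^ 2 ≤ ‖x - y‖ ^ 2 := by
    unfold qtrunc; linarith
  exact (pow_le_pow_iff_left₀ (norm_nonneg _) (norm_nonneg _) two_ne_zero).1 sq_le

/-- For `0 < n ≤ m` and `z, w` in a real inner product space,
`‖q_m(z + w) − q_n(w)‖ ≤ ‖z‖ + 2‖w‖·1_{‖w‖ > n}`. -/
theorem norm_qtrunc_add_sub_qtrunc_le {E : Type*} [NormedAddCommGroup E]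
    [InnerProductSpace ℝ E]
    (n m : ℝ) (hn : 0 < n) (hnm : n ≤ m) (z w : E) :
    ‖qtrunc m (z + w) - qtrunc n w‖ ≤ ‖z‖ + 2 * ‖w‖ * (if n < ‖w‖ then 1 else 0) := by
  have hm : 0 < m := hn.trans_le hnm
  have lip : ‖qtrunc m (z + w) - qtrunc m w‖ ≤ ‖z‖ := by
    simpa using norm_qtrunc_sub_qtrunc_le hm (z + w) w
  split_ifs with hw
  · calc ‖qtrunc m (z + w) - qtrunc n w‖
        ≤ ‖qtrunc m (z + w) - w‖ + ‖w - qtrunc n w‖ := norm_sub_le_norm_sub_add_norm_sub _ _ _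
      _ ≤ ‖qtrunc m (z + w) - qtrunc m w‖ + ‖qtrunc m w - w‖ + ‖w - qtrunc n w‖ := by
          gcongr; exact norm_sub_le_norm_sub_add_norm_sub _ _ _
      _ ≤ ‖z‖ + 2 * ‖w‖ * 1 := by
          linarith [norm_sub_rev (qtrunc m w) w ▸ norm_sub_qtrunc_le hm.le w,
            norm_sub_qtrunc_le hn.le w]
  · have hw : ‖w‖ ≤ n := not_lt.1 hw
    rw [qtrunc_eq_self hm (hw.trans hnm)] at lip
    rwa [qtrunc_eq_self hn hw, mul_zero, add_zero]
end

section
/- Let κ : [0,∞) → [0,∞) be nondecreasing and concave with κ(0) = 0, and let g : ℝ^k × ℝ^{k×d} → ℝ^k satisfy: (i) ⟨y₁ − y₂, g(y₁, z) − g(y₂, z)⟩ ≤ κ(|y₁ − y₂|²) for all y₁, y₂ ∈ ℝ^k and z ∈ ℝ^{k×d}; (ii) |g(y, z₁) − g(y, z₂)| ≤ μ|z₁ − z₂| for all y, z₁, z₂, where μ ≥ 0. Let α > 0, let φ ≥ 0 be a bound with sup_{|y| ≤ α+1} |g(y, 0) − g(0, 0)| ≤ φ, and let θ : ℝ^k →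 [0,1] be an L-Lipschitz function (L > 0) with θ(y) = 1 for |y| ≤ α and θ(y) = 0 for |y| ≥ α + 1. For n ≥ 1 define h(y, z) = θ(y)·(g(y, q_n(z)) − g(0,0))·(n / max(φ, n)) + g(0,0). Then for all y₁, y₂ ∈ ℝ^k and z ∈ ℝ^{k×d}, ⟨y₁ − y₂, h(y₁, z) − h(y₂, z)⟩ ≤ κ(|y₁ − y₂|²) + L(1 + μ)·n·|y₁ − y₂|². -/
/-!
With `c = n / max(φ, n) ∈ [0, 1]` and `F(y) = c • (g(y, q_n z) − g(0,0))` we have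
`h(y, z) = θ(y) • F(y) + g(0,0)`. The map `F` inherits the one-sided bound `κ` from `g`,
and on the ball `‖y‖ ≤ α + 1` it is bounded by `c (μ n + φ) ≤ (1 + μ) n`, because
`‖q_n z‖ ≤ n`. Writing `θ₁F₁ − θ₂F₂ = θ₁(F₁ − F₂) + (θ₁ − θ₂)F₂` (or the same with the
roles of the two points exchanged, whichever of them lies in the ball) and using that `θ`
is `L`-Lipschitz gives the claim; outside the ball `θ` vanishes at both points.
-/

open scoped RealInnerProductSpace

section

variable {E : Type*}

theorem norm_qtrunc_le [NormedAddCommGroup E] [NormedSpace ℝ E] {r : ℝ} (hr : 0 ≤ r) (x : E) :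
    ‖qtrunc r x‖ ≤ r := by
  have hM : 0 ≤ max ‖x‖ r := le_max_of_le_right hr
  calc ‖qtrunc r x‖ = r * (‖x‖ / max ‖x‖ r) := by
        rw [qtrunc, norm_smul, Real.norm_of_nonneg (div_nonneg hr hM)]; ring
    _ ≤ r * 1 := by gcongr; exact div_le_one_of_le₀ (le_max_left _ _) hM
    _ = r := mul_one r

variable [NormedAddCommGroup E] [InnerProductSpace ℝ E]

theorem inner_smul_sub_smul_le_of_norm_right_le {x u v : E} {a b K ℓ B : ℝ}
    (ha : a ∈ Set.Icc (0 : ℝ) 1) (hK : 0 ≤ K) (huv : ⟪x, u - v⟫ ≤ K) (hab : |a - b| ≤ ℓ)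
    (hv : ‖v‖ ≤ B) :
    ⟪x, a • u - b • v⟫ ≤ K + ℓ * ‖x‖ * B := by
  have hsplit : a • u - b • v = a • (u - v) + (a - b) • v := by
    rw [smul_sub, sub_smul]; abel
  have hfirst : a * ⟪x, u - v⟫ ≤ K :=
    (mul_le_mul_of_nonneg_left huv ha.1).trans (mul_le_of_le_one_left hK ha.2)
  have hsecond : (a - b) * ⟪x, v⟫ ≤ ℓ * ‖x‖ * B := calc
    (a - b) * ⟪x, v⟫ ≤ |a - b| * (‖x‖ * ‖v‖) :=
      (le_abs_self _).trans (by rw [abs_mul]; gcongr; exact abs_real_inner_le_norm x v)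
    _ ≤ ℓ * (‖x‖ * B) := by gcongr; exact (abs_nonneg _).trans hab
    _ = ℓ * ‖x‖ * B := by ring
  rw [hsplit, inner_add_right, real_inner_smul_right, real_inner_smul_right]
  linarith

theorem inner_smul_sub_smul_le {x u v : E} {a b K ℓ B : ℝ}
    (ha : a ∈ Set.Icc (0 : ℝ) 1) (hb : b ∈ Set.Icc (0 : ℝ) 1) (hK : 0 ≤ K)
    (huv : ⟪x, u - v⟫ ≤ K) (hab : |a - b| ≤ ℓ) (hB : ‖u‖ ≤ B ∨ ‖v‖ ≤ B) :
    ⟪x, a • u - b • v⟫ ≤ K + ℓ * ‖x‖ * B := by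
  rcases hB with hu | hv
  · have hflip : ∀ p q : E, ⟪-x, p - q⟫ = ⟪x, q - p⟫ := fun p q ↦ by
      rw [inner_neg_left, ← inner_neg_right, neg_sub]
    have hswap := inner_smul_sub_smul_le_of_norm_right_le (x := -x) (u := v) (v := u) hb hK
      ((hflip v u).trans_le huv) ((abs_sub_comm b a).trans_le hab) hu
    rwa [hflip, norm_neg] at hswap
  · exact inner_smul_sub_smul_le_of_norm_right_le ha hK huv hab hv

end

theorem div_max_mul_add_le {n φ μ : ℝ} (hn : 0 ≤ n) (hμ : 0 ≤ μ) :
    n / max φ n * (μ * n + φ) ≤ (1 + μ) * n := by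
  by_cases hM : max φ n = 0
  · rw [hM, div_zero, zero_mul]; positivity
  have hc1 : n / max φ n ≤ 1 :=
    div_le_one_of_le₀ (le_max_right _ _) (hn.trans (le_max_right _ _))
  have hcφ : n / max φ n * φ ≤ n := calc
    n / max φ n * φ ≤ n / max φ n * max φ n := by gcongr; exact le_max_left _ _
    _ = n := div_mul_cancel₀ n hM
  have hcμ : n / max φ n * (μ * n) ≤ μ * n := mul_le_of_le_one_left (by positivity) hc1
  linarith [mul_add (n / max φ n) (μ * n) φ]
theorem truncated_generator_weak_monotonicity_general {k d : ℕ} (κ : ℝ → ℝ)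
    (hnonneg : ∀ u ∈ Set.Ici (0 : ℝ), 0 ≤ κ u)
    (g : EuclideanSpace ℝ (Fin k) → EuclideanSpace ℝ (Fin k × Fin d) →
      EuclideanSpace ℝ (Fin k))
    (μ : ℝ) (hμ : 0 ≤ μ)
    (hg1 : ∀ (y₁ y₂ : EuclideanSpace ℝ (Fin k)) (z : EuclideanSpace ℝ (Fin k × Fin d)),
      ⟪y₁ - y₂, g y₁ z - g y₂ z⟫ ≤ κ (‖y₁ - y₂‖ ^ 2))
    (hg2 : ∀ (y : EuclideanSpace ℝ (Fin k)) (z₁ z₂ : EuclideanSpace ℝ (Fin k × Fin d)),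
      ‖g y z₁ - g y z₂‖ ≤ μ * ‖z₁ - z₂‖)
    (α : ℝ) (φ : ℝ)
    (hφ : ∀ y : EuclideanSpace ℝ (Fin k), ‖y‖ ≤ α + 1 → ‖g y 0 - g 0 0‖ ≤ φ)
    (θ : EuclideanSpace ℝ (Fin k) → ℝ) (L : ℝ) (hL : 0 < L)
    (hθ01 : ∀ y, θ y ∈ Set.Icc (0 : ℝ) 1)
    (hθLip : ∀ y₁ y₂ : EuclideanSpace ℝ (Fin k), |θ y₁ - θ y₂| ≤ L * ‖y₁ - y₂‖)
    (hθ0 : ∀ y : EuclideanSpace ℝ (Fin k), α + 1 ≤ ‖y‖ → θ y = 0)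
    (n : ℕ)
    (h : EuclideanSpace ℝ (Fin k) → EuclideanSpace ℝ (Fin k × Fin d) →
      EuclideanSpace ℝ (Fin k))
    (hdef : ∀ y z, h y z =
      (θ y * ((n : ℝ) / max φ (n : ℝ))) • (g y (qtrunc (n : ℝ) z) - g 0 0) + g 0 0) :
    ∀ (y₁ y₂ : EuclideanSpace ℝ (Fin k)) (z : EuclideanSpace ℝ (Fin k × Fin d)),
      ⟪y₁ - y₂, h y₁ z - h y₂ z⟫ ≤
        κ (‖y₁ - y₂‖ ^ 2) + L * (1 + μ) * (n : ℝ) * ‖y₁ - y₂‖ ^ 2 := by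
  intro y₁ y₂ z
  set c : ℝ := n / max φ n
  set w := qtrunc (n : ℝ) z
  set F : EuclideanSpace ℝ (Fin k) → EuclideanSpace ℝ (Fin k) := fun y ↦ c • (g y w - g 0 0)
  have hc : c ∈ Set.Icc (0 : ℝ) 1 :=
    ⟨by positivity, div_le_one_of_le₀ (le_max_right _ _) (n.cast_nonneg.trans (le_max_right _ _))⟩
  have hκ : 0 ≤ κ (‖y₁ - y₂‖ ^ 2) := hnonneg _ (Set.mem_Ici.mpr (sq_nonneg _))
  have hF : ⟪y₁ - y₂, F y₁ - F y₂⟫ ≤ κ (‖y₁ - y₂‖ ^ 2) := by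
    rw [← smul_sub, sub_sub_sub_cancel_right, real_inner_smul_right]
    exact (mul_le_mul_of_nonneg_left (hg1 y₁ y₂ w) hc.1).trans (mul_le_of_le_one_left hκ hc.2)
  have hF_le : ∀ y, ‖y‖ ≤ α + 1 → ‖F y‖ ≤ (1 + μ) * n := fun y hy ↦ calc
    ‖F y‖ = c * ‖g y w - g 0 0‖ := by rw [norm_smul, Real.norm_of_nonneg hc.1]
    _ ≤ c * (μ * n + φ) := by
      gcongr
      refine (norm_sub_le_norm_sub_add_norm_sub _ (g y 0) _).trans (add_le_add ?_ (hφ y hy))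
      calc ‖g y w - g y 0‖ ≤ μ * ‖w‖ := by simpa using hg2 y w 0
        _ ≤ μ * n := by gcongr; exact norm_qtrunc_le n.cast_nonneg z
    _ ≤ (1 + μ) * n := div_max_mul_add_le n.cast_nonneg hμ
  rw [hdef, hdef, add_sub_add_right_eq_sub, mul_smul, mul_smul]
  by_cases hy : ‖y₁‖ ≤ α + 1 ∨ ‖y₂‖ ≤ α + 1
  · have hbound := inner_smul_sub_smul_le (hθ01 y₁) (hθ01 y₂) hκ hF (hθLip y₁ y₂)
      (hy.imp (hF_le y₁) (hF_le y₂))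
    linarith
  · rw [not_or, not_le, not_le] at hy
    rw [hθ0 y₁ hy.1.le, hθ0 y₂ hy.2.le, zero_smul, zero_smul, sub_zero, inner_zero_right]
    have : 0 ≤ 1 + μ := by linarith
    positivity

/-- The truncated generator
`h(y,z) = θ(y)·(g(y, q_n(z)) − g(0,0))·(n / max(φ, n)) + g(0,0)` satisfies the
weak monotonicity condition with the function `κ(·) + L(1+μ)n·(·)`. -/
theorem truncated_generator_weak_monotonicity {k d : ℕ} (κ : ℝ → ℝ)
    (hmono : MonotoneOn κ (Set.Ici 0))
    (hconc : ConcaveOn ℝ (Set.Ici 0) κ)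
    (hnonneg : ∀ u ∈ Set.Ici (0 : ℝ), 0 ≤ κ u)
    (h0 : κ 0 = 0)
    (g : EuclideanSpace ℝ (Fin k) → EuclideanSpace ℝ (Fin k × Fin d) →
      EuclideanSpace ℝ (Fin k))
    (μ : ℝ) (hμ : 0 ≤ μ)
    (hg1 : ∀ (y₁ y₂ : EuclideanSpace ℝ (Fin k)) (z : EuclideanSpace ℝ (Fin k × Fin d)),
      ⟪y₁ - y₂, g y₁ z - g y₂ z⟫ ≤ κ (‖y₁ - y₂‖ ^ 2))
    (hg2 : ∀ (y : EuclideanSpace ℝ (Fin k)) (z₁ z₂ : EuclideanSpace ℝ (Fin k × Fin d)),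
      ‖g y z₁ - g y z₂‖ ≤ μ * ‖z₁ - z₂‖)
    (α : ℝ) (hα : 0 < α) (φ : ℝ) (hφ0 : 0 ≤ φ)
    (hφ : ∀ y : EuclideanSpace ℝ (Fin k), ‖y‖ ≤ α + 1 → ‖g y 0 - g 0 0‖ ≤ φ)
    (θ : EuclideanSpace ℝ (Fin k) → ℝ) (L : ℝ) (hL : 0 < L)
    (hθ01 : ∀ y, θ y ∈ Set.Icc (0 : ℝ) 1)
    (hθLip : ∀ y₁ y₂ : EuclideanSpace ℝ (Fin k), |θ y₁ - θ y₂| ≤ L * ‖y₁ - y₂‖)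
    (hθ1 : ∀ y : EuclideanSpace ℝ (Fin k), ‖y‖ ≤ α → θ y = 1)
    (hθ0 : ∀ y : EuclideanSpace ℝ (Fin k), α + 1 ≤ ‖y‖ → θ y = 0)
    (n : ℕ) (hn : 1 ≤ n)
    (h : EuclideanSpace ℝ (Fin k) → EuclideanSpace ℝ (Fin k × Fin d) →
      EuclideanSpace ℝ (Fin k))
    (hdef : ∀ y z, h y z =
      (θ y * ((n : ℝ) / max φ (n : ℝ))) • (g y (qtrunc (n : ℝ) z) - g 0 0) + g 0 0) :
    ∀ (y₁ y₂ : EuclideanSpace ℝ (Fin k)) (z : EuclideanSpace ℝ (Fin k × Fin d)),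
      ⟪y₁ - y₂, h y₁ z - h y₂ z⟫ ≤
        κ (‖y₁ - y₂‖ ^ 2) + L * (1 + μ) * (n : ℝ) * ‖y₁ - y₂‖ ^ 2 :=
  truncated_generator_weak_monotonicity_general κ hnonneg g μ hμ hg1 hg2 α φ hφ θ L hL hθ01 hθLip
    hθ0 n h hdef
end

section
/- (Backward Bihari–Osgood lemma.) Let T > 0, C > 0, and let κ : [0,∞) → [0,∞) be nondecreasing, continuous, with κ(0) = 0, κ(u) > 0 for u > 0, and such that for every ε > 0 the Lebesgue integral ∫_{(0,ε)} 1/κ(u) du is infinite. If v : [0,T] → [0,∞) is a bounded measurable function satisfying v(t) ≤ C∫_t^T κ(v(s)) ds for every t ∈ [0,T], then v(t) = 0 for every t ∈ [0,T]. -/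
/-!
Put `w t = C ∫_t^T κ(v)`. Then `v ≤ w`, `w` is nonincreasing with `w T = 0`, and on `[t, s]` it
drops by at most `C (s - t) κ(w t)`. Consequently `t ↦ ∫_{ε}^{w t + ε} du / κ(u) + C t` is
nondecreasing for every `ε > 0` (it suffices to compare nearby times, where `w` moves by less than
`ε`), so `∫_ε^{v t} du / κ(u) ≤ C T` uniformly in `ε`. Letting `ε → 0` contradicts the Osgood
condition unless `v t = 0`.
-/

open MeasureTheory Set
open scoped ENNReal

theorem monotoneOn_Icc_of_forall_sub_le {β : Type*} [Preorder β] {F : ℝ → β} {a b δ : ℝ}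
    (hδ : 0 < δ) (h : ∀ t s, a ≤ t → t ≤ s → s ≤ b → s - t ≤ δ → F t ≤ F s) :
    MonotoneOn F (Icc a b) := by
  have chain : ∀ n : ℕ, ∀ t s, a ≤ t → t ≤ s → s ≤ b → s - t ≤ n * δ → F t ≤ F s := by
    intro n
    induction n with
    | zero =>
      intro t s _ hts _ hst
      rw [le_antisymm hts (by simpa using hst)]
    | succ n ih =>
      intro t s hat hts hsb hst
      rcases le_or_gt (s - t) δ with hsmall | hlarge
      · exact h t s hat hts hsb hsmall
      · push_cast at hst
        exact (ih t (s - δ) hat (by linarith) (by linarith) (by linarith)).trans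
          (h (s - δ) s (by linarith) (by linarith) hsb (by linarith))
  intro t ht s hs hts
  obtain ⟨n, hn⟩ := exists_nat_ge ((s - t) / δ)
  exact chain n t s ht.1 hts hs.2 ((div_le_iff₀ hδ).1 hn)

theorem monotone_comp_max_of_monotoneOn_Ici {β : Type*} [Preorder β] {f : ℝ → β} {a : ℝ}
    (hf : MonotoneOn f (Ici a)) : Monotone fun x => f (max x a) :=
  fun _ _ hxy => hf (mem_Ici.2 (le_max_right _ _)) (mem_Ici.2 (le_max_right _ _))
    (max_le_max hxy le_rfl)

theorem Monotone.integrableOn_comp_of_le {α : Type*} [MeasurableSpace α] {μ : Measure α}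
    {g : ℝ → ℝ} {v : α → ℝ} {s : Set α} {M : ℝ} (hg : Monotone g) (hg0 : ∀ u, 0 ≤ g u)
    (hv : Measurable v) (hs : MeasurableSet s) (hμs : μ s ≠ ∞) (hM : ∀ t ∈ s, v t ≤ M) :
    IntegrableOn (fun t => g (v t)) s μ :=
  Measure.integrableOn_of_bounded (M := g M) hμs (hg.measurable.comp hv).aestronglyMeasurable
    ((ae_restrict_iff' hs).2 (ae_of_all _ fun t ht => by
      rw [Real.norm_of_nonneg (hg0 _)]; exact hg (hM t ht)))

section MonotoneInv

variable {g : ℝ → ℝ} {x y z : ℝ}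

theorem intervalIntegrable_inv_of_monotone (hg : Monotone g) (hz : 0 < g z) (hy : z ≤ y)
    (hx : z ≤ x) : IntervalIntegrable (fun u => (g u)⁻¹) volume y x := by
  refine AntitoneOn.intervalIntegrable fun u hu w _ huw => ?_
  have hzu : z ≤ u := (le_min hy hx).trans hu.1
  exact inv_anti₀ (hz.trans_le (hg hzu)) (hg huw)

theorem integral_inv_le_of_monotone (hg : Monotone g) (hy : 0 < g y) (hyx : y ≤ x) :
    ∫ u in y..x, (g u)⁻¹ ≤ (x - y) / g y := by
  calc ∫ u in y..x, (g u)⁻¹ ≤ ∫ _ in y..x, (g y)⁻¹ :=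
        intervalIntegral.integral_mono_on hyx
          (intervalIntegrable_inv_of_monotone hg hy le_rfl hyx) intervalIntegrable_const
          fun u hu => inv_anti₀ hy (hg hu.1)
    _ = (x - y) / g y := by rw [intervalIntegral.integral_const, smul_eq_mul, div_eq_mul_inv]

theorem integral_inv_add_le_of_sub_le_mul {c ε : ℝ} (hg : Monotone g)
    (hc : 0 ≤ c) (hpos : 0 < g (y + ε)) (hyx : y ≤ x) (hxy : x ≤ y + ε)
    (hsub : x - y ≤ c * g x) :
    ∫ u in (y + ε)..(x + ε), (g u)⁻¹ ≤ c :=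
  calc ∫ u in (y + ε)..(x + ε), (g u)⁻¹ ≤ (x + ε - (y + ε)) / g (y + ε) :=
        integral_inv_le_of_monotone hg hpos (by linarith)
    _ ≤ c * g x / g (y + ε) := div_le_div_of_nonneg_right (by linarith) hpos.le
    _ ≤ c := (div_le_iff₀ hpos).2 (mul_le_mul_of_nonneg_left (hg hxy) hc)

end MonotoneInv

theorem integral_inv_le_of_antitoneOn_of_sub_le {g w : ℝ → ℝ} {a b C ε : ℝ} (hg : Monotone g)
    (hC : 0 ≤ C) (hε : 0 < ε) (hgε : 0 < g ε) (hw : AntitoneOn w (Icc a b)) (hwb : 0 ≤ w b)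
    (hstep : ∀ t s, a ≤ t → t ≤ s → s ≤ b → w t - w s ≤ C * (s - t) * g (w t)) :
    ∀ t ∈ Icc a b, ∫ u in (w b + ε)..(w t + ε), (g u)⁻¹ ≤ C * (b - t) := by
  intro t ht
  have hab : a ≤ b := ht.1.trans ht.2
  have hw_ge : ∀ s ∈ Icc a b, w b ≤ w s := fun s hs => hw hs (right_mem_Icc.2 hab) hs.2
  have hpos : ∀ s ∈ Icc a b, 0 < g (w s + ε) := fun s hs =>
    hgε.trans_le (hg (by linarith [hw_ge s hs]))
  have hint : ∀ s ∈ Icc a b,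
      IntervalIntegrable (fun u => (g u)⁻¹) volume (w b + ε) (w s + ε) := fun s hs =>
    intervalIntegrable_inv_of_monotone hg hgε (by linarith) (by linarith [hw_ge s hs])
  set F : ℝ → ℝ := fun s => (∫ u in (w b + ε)..(w s + ε), (g u)⁻¹) + C * s with hF_def
  -- on steps shorter than `δ`, `w` drops by at most `ε`, since `g ∘ w ≤ g (w a + ε)`
  set δ := ε / (C * g (w a + ε) + 1)
  have hga := hpos a (left_mem_Icc.2 hab)
  have hδ : 0 < δ := div_pos hε (by positivity)
  have hCδ : C * δ * g (w a + ε) ≤ ε := by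
    have : δ * (C * g (w a + ε) + 1) = ε := div_mul_cancel₀ _ (by positivity)
    nlinarith
  have hF : MonotoneOn F (Icc a b) := by
    refine monotoneOn_Icc_of_forall_sub_le hδ fun t s hat hts hsb hst => ?_
    have htI : t ∈ Icc a b := ⟨hat, hts.trans hsb⟩
    have hsI : s ∈ Icc a b := ⟨hat.trans hts, hsb⟩
    have hstep' := hstep t s hat hts hsb
    have hdrop : w t ≤ w s + ε :=
      calc w t ≤ w s + C * (s - t) * g (w t) := by linarith
        _ ≤ w s + C * (s - t) * g (w a + ε) := by
          gcongr
          exact hg (by linarith [hw (left_mem_Icc.2 hab) htI hat])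
        _ ≤ w s + C * δ * g (w a + ε) := by gcongr
        _ ≤ w s + ε := by linarith
    have hpiece := integral_inv_add_le_of_sub_le_mul hg (mul_nonneg hC (sub_nonneg.2 hts))
      (hpos s hsI) (hw htI hsI hts) hdrop hstep'
    rw [← intervalIntegral.integral_interval_sub_left (hint t htI) (hint s hsI)] at hpiece
    simp only [hF_def]
    linarith
  have hFb := hF ht (right_mem_Icc.2 hab) ht.2
  simp only [hF_def, intervalIntegral.integral_same, zero_add] at hFb
  linarith

section TailIntegral

variable {f g : ℝ → ℝ} {a b C : ℝ}

theorem mul_integral_tail_sub (hf : IntegrableOn f (Icc a b)) {t s : ℝ} (hat : a ≤ t)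
    (hts : t ≤ s) (hsb : s ≤ b) :
    (C * ∫ r in t..b, f r) - C * ∫ r in s..b, f r = C * ∫ r in t..s, f r := by
  have hint : ∀ x y, x ∈ Icc a b → y ∈ Icc a b → IntervalIntegrable f volume x y :=
    fun x y hx hy => (hf.mono_set (uIcc_subset_Icc hx hy)).intervalIntegrable
  have htI : t ∈ Icc a b := ⟨hat, hts.trans hsb⟩
  have hsI : s ∈ Icc a b := ⟨hat.trans hts, hsb⟩
  have hbI : b ∈ Icc a b := ⟨hat.trans (hts.trans hsb), le_rfl⟩
  rw [← intervalIntegral.integral_add_adjacent_intervals (hint t s htI hsI) (hint s b hsI hbI)]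
  ring

theorem antitoneOn_mul_integral_tail (hC : 0 ≤ C) (hf : IntegrableOn f (Icc a b))
    (hf0 : ∀ s ∈ Icc a b, 0 ≤ f s) : AntitoneOn (fun t => C * ∫ r in t..b, f r) (Icc a b) := by
  intro t ht s hs hts
  have hsub := mul_integral_tail_sub (C := C) hf ht.1 hts hs.2
  have hpiece : 0 ≤ C * ∫ r in t..s, f r := mul_nonneg hC <|
    intervalIntegral.integral_nonneg hts fun u hu => hf0 u ⟨ht.1.trans hu.1, hu.2.trans hs.2⟩
  linarith

theorem mul_integral_tail_sub_le (hC : 0 ≤ C) (hf : IntegrableOn f (Icc a b))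
    (hf0 : ∀ s ∈ Icc a b, 0 ≤ f s) (hg : Monotone g)
    (hfg : ∀ s ∈ Icc a b, f s ≤ g (C * ∫ r in s..b, f r)) (t s : ℝ) (hat : a ≤ t) (hts : t ≤ s)
    (hsb : s ≤ b) :
    (C * ∫ r in t..b, f r) - C * ∫ r in s..b, f r ≤ C * (s - t) * g (C * ∫ r in t..b, f r) := by
  have htI : t ∈ Icc a b := ⟨hat, hts.trans hsb⟩
  rw [mul_integral_tail_sub hf hat hts hsb, mul_assoc]
  gcongr
  calc ∫ r in t..s, f r ≤ ∫ _ in t..s, g (C * ∫ r in t..b, f r) := by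
        refine intervalIntegral.integral_mono_on hts
          (hf.mono_set (uIcc_subset_Icc htI ⟨hat.trans hts, hsb⟩)).intervalIntegrable
          intervalIntegrable_const fun u hu => ?_
        have huI : u ∈ Icc a b := ⟨hat.trans hu.1, hu.2.trans hsb⟩
        exact (hfg u huI).trans (hg (antitoneOn_mul_integral_tail hC hf hf0 htI huI hu.1))
    _ = (s - t) * g (C * ∫ r in t..b, f r) := by
        rw [intervalIntegral.integral_const, smul_eq_mul]

end TailIntegral

theorem integral_inv_le_of_le_mul_integral {g v : ℝ → ℝ} {a b C ε : ℝ} (hg : Monotone g)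
    (hg0 : ∀ u, 0 ≤ g u) (hC : 0 ≤ C) (hε : 0 < ε) (hgε : 0 < g ε)
    (hint : IntegrableOn (fun s => g (v s)) (Icc a b))
    (hv : ∀ t ∈ Icc a b, v t ≤ C * ∫ s in t..b, g (v s)) {t : ℝ} (ht : t ∈ Icc a b)
    (hεv : ε ≤ v t) : ∫ u in ε..v t, (g u)⁻¹ ≤ C * (b - t) := by
  set w : ℝ → ℝ := fun t => C * ∫ s in t..b, g (v s) with hw_def
  have hwb : w b = 0 := by simp only [hw_def, intervalIntegral.integral_same, mul_zero]
  have hf0 : ∀ s ∈ Icc a b, 0 ≤ g (v s) := fun s _ => hg0 (v s)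
  have hbound : ∫ u in (w b + ε)..(w t + ε), (g u)⁻¹ ≤ C * (b - t) :=
    integral_inv_le_of_antitoneOn_of_sub_le hg hC hε hgε
      (antitoneOn_mul_integral_tail hC hint hf0) hwb.ge
      (mul_integral_tail_sub_le hC hint hf0 hg fun s hs => hg (hv s hs)) t ht
  rw [hwb, zero_add] at hbound
  have hvw : v t ≤ w t := hv t ht
  exact (intervalIntegral.integral_mono_interval le_rfl hεv (by linarith)
    (ae_of_all _ fun u => inv_nonneg.2 (hg0 u))
    (intervalIntegrable_inv_of_monotone hg hgε le_rfl (by linarith))).trans hbound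

theorem setLIntegral_Ioo_ofReal_le_of_forall_integral_le {h : ℝ → ℝ} {δ B : ℝ}
    (h0 : ∀ u ∈ Ioc 0 δ, 0 ≤ h u) (hint : ∀ ε ∈ Ioo 0 δ, IntervalIntegrable h volume ε δ)
    (hB : ∀ ε ∈ Ioo 0 δ, ∫ u in ε..δ, h u ≤ B) :
    ∫⁻ u in Ioo 0 δ, ENNReal.ofReal (h u) ≤ ENNReal.ofReal B := by
  rcases le_or_gt δ 0 with hδ | hδ
  · simp [Ioo_eq_empty_of_le hδ]
  set s : ℕ → Set ℝ := fun n => Ioc (δ / (n + 2)) δ with hs_def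
  have hmem : ∀ n : ℕ, δ / (n + 2) ∈ Ioo 0 δ := fun n =>
    ⟨by positivity, div_lt_self hδ (by linarith [(n.cast_nonneg : (0 : ℝ) ≤ n)])⟩
  have hcover : Ioo 0 δ ⊆ ⋃ n, s n := by
    intro u hu
    obtain ⟨n, hn⟩ := exists_nat_gt (δ / u)
    refine mem_iUnion.2 ⟨n, ?_, hu.2.le⟩
    rw [div_lt_iff₀ hu.1] at hn
    rw [div_lt_iff₀ (by positivity)]
    nlinarith [hu.1]
  have hdir : Directed (· ⊆ ·) s := Monotone.directed_le fun m n hmn =>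
    Ioc_subset_Ioc_left (div_le_div_of_nonneg_left hδ.le (by positivity) (by gcongr))
  calc ∫⁻ u in Ioo 0 δ, ENNReal.ofReal (h u) ≤ ∫⁻ u in ⋃ n, s n, ENNReal.ofReal (h u) :=
        lintegral_mono_set hcover
    _ = ⨆ n, ∫⁻ u in s n, ENNReal.ofReal (h u) := setLIntegral_iUnion_of_directed _ hdir
    _ ≤ ENNReal.ofReal B := iSup_le fun n => by
        have hI := hint _ (hmem n)
        rw [hs_def, ← ofReal_integral_eq_lintegral_ofReal hI.1,
          ← intervalIntegral.integral_of_le (hmem n).2.le]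
        · exact ENNReal.ofReal_le_ofReal (hB _ (hmem n))
        · exact (ae_restrict_iff' measurableSet_Ioc).2
            (ae_of_all _ fun u hu => h0 u ⟨(hmem n).1.trans hu.1, hu.2⟩)

theorem backward_bihari_osgood_general (T C : ℝ) (hC : 0 < C)
    (κ : ℝ → ℝ) (hκmono : MonotoneOn κ (Set.Ici 0))
    (hκ0 : κ 0 = 0)
    (hκpos : ∀ u : ℝ, 0 < u → 0 < κ u)
    (hosgood : ∀ ε : ℝ, 0 < ε →
      ∫⁻ u in Set.Ioo (0 : ℝ) ε, ENNReal.ofReal (1 / κ u) = ∞)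
    (v : ℝ → ℝ) (hv_meas : Measurable v)
    (hv_nonneg : ∀ t ∈ Set.Icc (0 : ℝ) T, 0 ≤ v t)
    (hv_bdd : ∃ M : ℝ, ∀ t ∈ Set.Icc (0 : ℝ) T, v t ≤ M)
    (hineq : ∀ t ∈ Set.Icc (0 : ℝ) T,
      v t ≤ C * ∫ s in Set.Ioc t T, κ (v s)) :
    ∀ t ∈ Set.Icc (0 : ℝ) T, v t = 0 := by
  obtain ⟨M, hM⟩ := hv_bdd
  set g : ℝ → ℝ := fun u => κ (max u 0) with hg_def
  have hg : Monotone g := monotone_comp_max_of_monotoneOn_Ici hκmono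
  have hg_eq : ∀ u, 0 ≤ u → g u = κ u := fun u hu => by simp only [hg_def, max_eq_left hu]
  have hg0 : ∀ u, 0 ≤ g u := fun u =>
    hκ0 ▸ hκmono (mem_Ici.2 le_rfl) (mem_Ici.2 (le_max_right u 0)) (le_max_right u 0)
  have hg_pos : ∀ u, 0 < u → 0 < g u := fun u hu => by rw [hg_eq u hu.le]; exact hκpos u hu
  have hint : IntegrableOn (fun s => g (v s)) (Icc 0 T) :=
    hg.integrableOn_comp_of_le hg0 hv_meas measurableSet_Icc measure_Icc_lt_top.ne hM
  have hv : ∀ t ∈ Icc 0 T, v t ≤ C * ∫ s in t..T, g (v s) := fun t ht => by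
    rw [intervalIntegral.integral_of_le ht.2, setIntegral_congr_fun measurableSet_Ioc
      fun s hs => hg_eq _ (hv_nonneg s ⟨ht.1.trans hs.1.le, hs.2⟩)]
    exact hineq t ht
  intro t ht
  by_contra hne
  have hvt : 0 < v t := (hv_nonneg t ht).lt_of_ne' hne
  have hfinite : ∫⁻ u in Ioo 0 (v t), ENNReal.ofReal (g u)⁻¹ ≤ ENNReal.ofReal (C * (T - t)) :=
    setLIntegral_Ioo_ofReal_le_of_forall_integral_le (fun u _ => inv_nonneg.2 (hg0 u))
      (fun ε hε => intervalIntegrable_inv_of_monotone hg (hg_pos ε hε.1) le_rfl hε.2.le)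
      (fun ε hε => integral_inv_le_of_le_mul_integral hg hg0 hC.le hε.1 (hg_pos ε hε.1) hint hv
        ht hε.2.le)
  have hinf := hosgood (v t) hvt
  rw [setLIntegral_congr_fun measurableSet_Ioo fun u hu => by rw [one_div, ← hg_eq u hu.1.le]]
    at hinf
  rw [hinf, top_le_iff] at hfinite
  exact ENNReal.ofReal_ne_top hfinite

/-- Backward Bihari–Osgood lemma: if `κ` is nondecreasing, continuous,
vanishes only at `0`, and satisfies the Osgood condition
`∫_{0+} du/κ(u) = +∞`, then any bounded nonnegative measurable `v` with
`v(t) ≤ C∫_t^T κ(v(s)) ds` on `[0,T]` vanishes identically. -/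
theorem backward_bihari_osgood (T C : ℝ) (hT : 0 < T) (hC : 0 < C)
    (κ : ℝ → ℝ) (hκmono : MonotoneOn κ (Set.Ici 0))
    (hκcont : ContinuousOn κ (Set.Ici 0))
    (hκ0 : κ 0 = 0)
    (hκpos : ∀ u : ℝ, 0 < u → 0 < κ u)
    (hosgood : ∀ ε : ℝ, 0 < ε →
      ∫⁻ u in Set.Ioo (0 : ℝ) ε, ENNReal.ofReal (1 / κ u) = ∞)
    (v : ℝ → ℝ) (hv_meas : Measurable v)
    (hv_nonneg : ∀ t ∈ Set.Icc (0 : ℝ) T, 0 ≤ v t)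
    (hv_bdd : ∃ M : ℝ, ∀ t ∈ Set.Icc (0 : ℝ) T, v t ≤ M)
    (hineq : ∀ t ∈ Set.Icc (0 : ℝ) T,
      v t ≤ C * ∫ s in Set.Ioc t T, κ (v s)) :
    ∀ t ∈ Set.Icc (0 : ℝ) T, v t = 0 :=
  backward_bihari_osgood_general T C hC κ hκmono hκ0 hκpos hosgood v hv_meas hv_nonneg hv_bdd hineq
end
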